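/- arXiv:1009.1728 — 6 statements merged into one kernel-verified Lean document; each statement's English description precedes it below -/
import Mathlib

section
/- Let T : C(S) → C(S) be a bounded positive linear operator on continuous functions on a compact metric space S that is strictly positive (T f(x) > 0 for all x whenever f ≥ 0, f ≢ 0), and suppose the spectral radius of T equals 1 and f is an eigenfunction of T for an eigenvalue λ with |λ| = 1. Then T|f| = |f|; in particular r := |f| is a positive continuous eigenfunction of T for the eigenvalue 1. -/
/-!
Positivity of `T` gives `|f| = |T f| ≤ T |f|`. If `g := T |f| - |f|` were nonzero, strict
positivity and compactness would give `δ > 0` with `δ • T |f| ≤ T g`, that is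
`(1 + δ) • T |f| ≤ T (T |f|)`. Iterating, `(1 + δ) ^ n ≤ ‖T ^ n‖` for all `n`, so the spectral
radius would be at least `1 + δ`.
-/

open Filter Topology

instance ContinuousMap.instHasSolidNorm {S : Type*} [TopologicalSpace S] [CompactSpace S] :
    HasSolidNorm C(S, ℝ) where
  solid _ g h := (ContinuousMap.norm_le _ (norm_nonneg g)).2 fun x =>
    (h x).trans_eq (abs_apply g x) |>.trans (g.norm_coe_le_norm x)

theorem abs_apply_le_apply_abs {α F : Type*} [AddCommGroup α] [Lattice α] [IsOrderedAddMonoid α]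
    [FunLike F α α] [AddMonoidHomClass F α α] {T : F} (hT : Monotone T) (a : α) :
    |T a| ≤ T |a| :=
  abs_le'.2 ⟨hT (le_abs_self a), by simpa only [map_neg] using hT (neg_le_abs a)⟩

theorem pow_smul_le_pow_apply {E : Type*} [NormedAddCommGroup E] [NormedSpace ℝ E]
    [PartialOrder E] [PosSMulMono ℝ E] {T : E →L[ℝ] E} (hT : Monotone T) {r : ℝ} (hr : 0 ≤ r)
    {x : E} (hx : r • x ≤ T x) (n : ℕ) : r ^ n • x ≤ (T ^ n) x := by
  induction n with
  | zero => simp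
  | succ n ih =>
    calc r ^ (n + 1) • x = r ^ n • r • x := by rw [pow_succ, mul_smul]
      _ ≤ r ^ n • T x := smul_le_smul_of_nonneg_left hx (pow_nonneg hr n)
      _ = T (r ^ n • x) := (T.map_smul _ _).symm
      _ ≤ T ((T ^ n) x) := hT ih
      _ = (T ^ (n + 1)) x := by rw [pow_succ']; rfl

theorem norm_le_norm_of_nonneg_of_le {α : Type*} [NormedAddCommGroup α] [Lattice α]
    [HasSolidNorm α] [IsOrderedAddMonoid α] {a b : α} (ha : 0 ≤ a) (hab : a ≤ b) : ‖a‖ ≤ ‖b‖ :=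
  norm_le_norm_of_abs_le_abs <| by rwa [abs_of_nonneg ha, abs_of_nonneg (ha.trans hab)]

section SolidNorm

variable {E : Type*} [NormedAddCommGroup E] [Lattice E] [HasSolidNorm E] [IsOrderedAddMonoid E]
  [NormedSpace ℝ E] [PosSMulMono ℝ E] {T : E →L[ℝ] E}

theorem pow_le_norm_pow_of_smul_le_apply (hT : Monotone T) {r : ℝ} (hr : 0 ≤ r)
    {x : E} (hx₀ : 0 ≤ x) (hx : x ≠ 0) (hrx : r • x ≤ T x) (n : ℕ) : r ^ n ≤ ‖T ^ n‖ := by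
  have hnorm : r ^ n * ‖x‖ ≤ ‖T ^ n‖ * ‖x‖ :=
    calc r ^ n * ‖x‖ = ‖r ^ n • x‖ := by
          rw [norm_smul, Real.norm_of_nonneg (pow_nonneg hr n)]
      _ ≤ ‖(T ^ n) x‖ := norm_le_norm_of_nonneg_of_le (smul_nonneg (pow_nonneg hr n) hx₀)
          (pow_smul_le_pow_apply hT hr hrx n)
      _ ≤ ‖T ^ n‖ * ‖x‖ := (T ^ n).le_opNorm x
  exact le_of_mul_le_mul_right hnorm (norm_pos_iff.2 hx)

theorem le_of_smul_le_apply (hT : Monotone T) {ρ : ℝ}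
    (hρ : Tendsto (fun n : ℕ => ‖T ^ n‖ ^ ((1 : ℝ) / n)) atTop (𝓝 ρ))
    {r : ℝ} {x : E} (hx₀ : 0 ≤ x) (hx : x ≠ 0) (hrx : r • x ≤ T x) : r ≤ ρ := by
  rcases le_total r 0 with hr | hr
  · exact hr.trans <| ge_of_tendsto' hρ fun n => by positivity
  refine ge_of_tendsto hρ <| (eventually_ne_atTop 0).mono fun n hn => ?_
  calc r = (r ^ n) ^ ((1 : ℝ) / n) := by rw [one_div, Real.pow_rpow_inv_natCast hr hn]
    _ ≤ ‖T ^ n‖ ^ ((1 : ℝ) / n) := by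
      gcongr
      exact pow_le_norm_pow_of_smul_le_apply hT hr hx₀ hx hrx n

end SolidNorm

theorem ContinuousMap.exists_pos_smul_le {S : Type*} [TopologicalSpace S] [CompactSpace S]
    [Nonempty S] (u v : C(S, ℝ)) (hv : ∀ x, 0 < v x) : ∃ δ > (0 : ℝ), δ • u ≤ v := by
  obtain ⟨x₀, -, hx₀⟩ := isCompact_univ.exists_isMinOn Set.univ_nonempty v.continuous.continuousOn
  have hM : 0 < ‖u‖ + 1 := by positivity
  have hδ : 0 < v x₀ / (‖u‖ + 1) := div_pos (hv x₀) hM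
  refine ⟨_, hδ, fun x => ?_⟩
  calc v x₀ / (‖u‖ + 1) * u x ≤ v x₀ / (‖u‖ + 1) * (‖u‖ + 1) :=
        mul_le_mul_of_nonneg_left (by linarith [u.apply_le_norm x]) hδ.le
    _ = v x₀ := div_mul_cancel₀ _ hM.ne'
    _ ≤ v x := hx₀ (Set.mem_univ x)

theorem ContinuousMap.apply_eq_smul_of_smul_le_apply {S : Type*} [TopologicalSpace S]
    [CompactSpace S] [Nonempty S] {T : C(S, ℝ) →L[ℝ] C(S, ℝ)} (hT : Monotone T)
    (hstrict : ∀ f : C(S, ℝ), 0 ≤ f → f ≠ 0 → ∀ x, 0 < T f x) {ρ : ℝ}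
    (hρ : Tendsto (fun n : ℕ => ‖T ^ n‖ ^ ((1 : ℝ) / n)) atTop (𝓝 ρ))
    {u : C(S, ℝ)} (hu₀ : 0 ≤ u) (hu : ρ • u ≤ T u) : T u = ρ • u := by
  by_contra hne
  set g := T u - ρ • u with hg_def
  have hg : ∀ x, 0 < T g x := hstrict g (sub_nonneg.2 hu) (sub_ne_zero.2 hne)
  obtain ⟨δ, hδ, hδg⟩ := (T u).exists_pos_smul_le (T g) hg
  have hTu₀ : 0 ≤ T u := map_zero T ▸ hT hu₀
  have hTu : T u ≠ 0 := fun h => (hg (Classical.arbitrary S)).ne' <| by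
    simp [hg_def, h]
  have hgrowth : (ρ + δ) • T u ≤ T (T u) :=
    calc (ρ + δ) • T u = T (ρ • u) + δ • T u := by rw [add_smul, map_smul]
      _ ≤ T (ρ • u) + T g := add_le_add_right hδg _
      _ = T (T u) := by rw [← map_add, hg_def, add_sub_cancel]
  linarith [le_of_smul_le_apply hT hρ hTu₀ hTu hgrowth]

/-- For a strictly positive bounded operator `T` on `C(S)` (`S` compact metric) with spectral
radius `1`: if `f` is an eigenfunction for an eigenvalue `l` of modulus `1`, then
`T|f| = |f|`; in particular `r := |f|` is a positive continuous eigenfunction of `T` for the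
eigenvalue `1`. -/
theorem stmt4 {S : Type*} [MetricSpace S] [CompactSpace S] [Nonempty S]
    (T : C(S, ℝ) →L[ℝ] C(S, ℝ))
    (hpos : ∀ f : C(S, ℝ), 0 ≤ f → 0 ≤ T f)
    (hstrict : ∀ f : C(S, ℝ), 0 ≤ f → f ≠ 0 → ∀ x, 0 < T f x)
    (hρ : Tendsto (fun n : ℕ => ‖(T ^ n : C(S, ℝ) →L[ℝ] C(S, ℝ))‖ ^ ((1 : ℝ) / n))
      atTop (nhds 1))
    (l : ℝ) (hl : |l| = 1) (f : C(S, ℝ)) (hf : f ≠ 0) (heig : T f = l • f) :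
    T |f| = |f| ∧ ∀ x, 0 < |f| x := by
  have hT : Monotone T := (monotone_iff_map_nonneg T).2 hpos
  have hsub : |f| ≤ T |f| :=
    calc |f| = |T f| := by ext x; simp [heig, abs_mul, hl]
      _ ≤ T |f| := abs_apply_le_apply_abs hT f
  have hfix : T |f| = |f| := by
    simpa using (ContinuousMap.apply_eq_smul_of_smul_le_apply hT hstrict hρ (abs_nonneg f)
      (by simpa using hsub))
  have habs : |f| ≠ 0 := fun h => hf <| by ext x; simpa using congr($h x)
  exact ⟨hfix, fun x => hfix ▸ hstrict |f| (abs_nonneg f) habs x⟩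
end

section
/- Let T : C(S) → C(S) be a strictly positive bounded linear operator on a compact metric space S admitting a positive eigenfunction r with T r = r. Then the eigenspace of T for the eigenvalue 1 is one-dimensional: any continuous g with T g = g is a scalar multiple of r. -/
/-- For a strictly positive bounded operator `T` on `C(S)` (`S` compact metric) admitting a
positive eigenfunction `r` with `T r = r`, the eigenspace for the eigenvalue `1` is
one-dimensional: any continuous `g` with `T g = g` is a scalar multiple of `r`. -/
theorem stmt5 {S : Type*} [MetricSpace S] [CompactSpace S] [Nonempty S]
    (T : C(S, ℝ) →L[ℝ] C(S, ℝ))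
    (hstrict : ∀ f : C(S, ℝ), 0 ≤ f → f ≠ 0 → ∀ x, 0 < T f x)
    (r : C(S, ℝ)) (hr : ∀ x, 0 < r x) (hTr : T r = r)
    (g : C(S, ℝ)) (hTg : T g = g) :
    ∃ c : ℝ, g = c • r := by
  have hφ : Continuous fun x => g x / r x :=
    g.continuous.div r.continuous fun x => (hr x).ne'
  obtain ⟨x₀, -, hx₀⟩ := isCompact_univ.exists_isMaxOn Set.univ_nonempty
    (hφ.continuousOn)
  set c : ℝ := g x₀ / r x₀ with hc
  refine ⟨c, ?_⟩
  set h : C(S, ℝ) := c • r - g with hh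
  have hge : (0 : C(S, ℝ)) ≤ h := by
    intro x
    have : g x / r x ≤ c := hx₀ (Set.mem_univ x)
    have := (div_le_iff₀ (hr x)).mp this
    simpa [hh, sub_nonneg, mul_comm] using this
  have hTh : T h = h := by
    simp [hh, map_sub, map_smul, hTr, hTg]
  have hzero : h = 0 := by
    by_contra hne
    have := hstrict h hge hne x₀
    rw [hTh] at this
    have : h x₀ = 0 := by
      simp [hh, hc, div_mul_cancel₀ (g x₀) (hr x₀).ne']
    linarith [hstrict h hge hne x₀, (by rw [hTh] at *; exact this : h x₀ = 0)]
  have := sub_eq_zero.mp hzero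
  exact this.symm
end

section
/- For κ in an interval (0, κ₀], the map κ ↦ ρ(κ) := lim_n ‖T_κ^n‖^{1/n} is log-convex and continuous on (0, κ₀), where T_κ f(x) = E[|xM|^κ f((xM)^∼)]. Consequently, if ρ(κ₂) < 1 < ρ(κ₁) for some 0 < κ₂ < κ₁ < κ₀, there exists a unique κ ∈ (κ₂, κ₁) with ρ(κ) = 1. -/
open MeasureTheory Filter Set

instance matrixMeasurableSpace {d : ℕ} : MeasurableSpace (Matrix (Fin d) (Fin d) ℝ) :=
  inferInstanceAs (MeasurableSpace ((Fin d) → (Fin d) → ℝ))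

/-- Row-vector action `x ↦ xA` of a matrix on Euclidean space. -/
noncomputable def vecMulE {d : ℕ} (x : EuclideanSpace ℝ (Fin d))
    (A : Matrix (Fin d) (Fin d) ℝ) : EuclideanSpace ℝ (Fin d) :=
  (EuclideanSpace.equiv (Fin d) ℝ).symm (Matrix.vecMul ((EuclideanSpace.equiv (Fin d) ℝ) x) A)

/-- Operator norm `‖A‖ = sup_{|x|=1} |xA|` for the row action. -/
noncomputable def opNormRow {d : ℕ} (A : Matrix (Fin d) (Fin d) ℝ) : ℝ :=
  ⨆ x : {x : EuclideanSpace ℝ (Fin d) // ‖x‖ = 1}, ‖vecMulE x.1 A‖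

/-- Projection of a nonzero vector onto the unit sphere. -/
noncomputable def projS {d : ℕ} (v : EuclideanSpace ℝ (Fin d)) (hv : v ≠ 0) :
    Metric.sphere (0 : EuclideanSpace ℝ (Fin d)) 1 :=
  ⟨‖v‖⁻¹ • v, by
    have h : ‖v‖ ≠ 0 := norm_ne_zero_iff.mpr hv
    simp [mem_sphere_zero_iff_norm, norm_smul, abs_of_nonneg (inv_nonneg.mpr (norm_nonneg v)),
      inv_mul_cancel₀ h]⟩

/-!
By Hölder's inequality, `T_{ta+sb} u ≤ (T_a g)^t (T_b h)^s` pointwise whenever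
`u ≤ g^t h^s`. The operators `T_κ` are positive on `C(S)`, so `‖T_κ^n‖ = ‖T_κ^n 1‖`, and
iterating gives `‖T_{ta+sb}^n‖ ≤ ‖T_a^n‖^t ‖T_b^n‖^s`; taking `n`-th roots,
`ρ(ta+sb) ≤ ρ(a)^t ρ(b)^s`. Since `T_κ 1` is bounded below by a positive constant on the compact
sphere, `ρ > 0`, so `log ρ` is convex, hence continuous on the open interval. The intermediate
value theorem produces a crossing of `1`, and convexity of `log ρ`, negative at `κ₂`, forbids a
second one.
-/

open Topology

theorem le_of_pow_le_of_tendsto_rpow {u : ℕ → ℝ} {c L : ℝ} (hc : 0 ≤ c) (h : ∀ n, c ^ n ≤ u n)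
    (hu : Tendsto (fun n : ℕ => u n ^ ((1 : ℝ) / n)) atTop (𝓝 L)) : c ≤ L := by
  refine ge_of_tendsto hu ((eventually_ne_atTop 0).mono fun n hn => ?_)
  calc c = (c ^ n) ^ ((1 : ℝ) / n) := by rw [one_div, Real.pow_rpow_inv_natCast hc hn]
    _ ≤ u n ^ ((1 : ℝ) / n) := Real.rpow_le_rpow (pow_nonneg hc n) (h n) (by positivity)

theorem le_rpow_mul_rpow_of_tendsto_rpow {u v w : ℕ → ℝ} {a b c t s : ℝ} (ht : 0 ≤ t) (hs : 0 ≤ s)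
    (hu0 : ∀ n, 0 ≤ u n) (hv0 : ∀ n, 0 ≤ v n) (hw0 : ∀ n, 0 ≤ w n)
    (h : ∀ n, u n ≤ v n ^ t * w n ^ s)
    (hu : Tendsto (fun n : ℕ => u n ^ ((1 : ℝ) / n)) atTop (𝓝 c))
    (hv : Tendsto (fun n : ℕ => v n ^ ((1 : ℝ) / n)) atTop (𝓝 a))
    (hw : Tendsto (fun n : ℕ => w n ^ ((1 : ℝ) / n)) atTop (𝓝 b)) :
    c ≤ a ^ t * b ^ s := by
  refine le_of_tendsto_of_tendsto' hu ((hv.rpow_const (Or.inr ht)).mul (hw.rpow_const (Or.inr hs)))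
    fun n => ?_
  have hn : (0 : ℝ) ≤ 1 / n := by positivity
  calc u n ^ ((1 : ℝ) / n) ≤ (v n ^ t * w n ^ s) ^ ((1 : ℝ) / n) :=
        Real.rpow_le_rpow (hu0 n) (h n) hn
    _ = (v n ^ ((1 : ℝ) / n)) ^ t * (w n ^ ((1 : ℝ) / n)) ^ s := by
        rw [Real.mul_rpow (by positivity [hv0 n]) (by positivity [hw0 n]), ← Real.rpow_mul (hv0 n),
          ← Real.rpow_mul (hw0 n), ← Real.rpow_mul (hv0 n), ← Real.rpow_mul (hw0 n), mul_comm t,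
          mul_comm s]

theorem convexOn_log_of_le_rpow_mul_rpow {I : Set ℝ} (hI : Convex ℝ I) {ρ : ℝ → ℝ}
    (hpos : ∀ k ∈ I, 0 < ρ k)
    (h : ∀ a ∈ I, ∀ b ∈ I, ∀ t s : ℝ, 0 ≤ t → 0 ≤ s → t + s = 1 →
      ρ (t * a + s * b) ≤ ρ a ^ t * ρ b ^ s) :
    ConvexOn ℝ I fun k => Real.log (ρ k) := by
  refine ⟨hI, fun a ha b hb t s ht hs hts => ?_⟩
  have hpa := hpos a ha
  have hpb := hpos b hb
  calc Real.log (ρ (t • a + s • b)) ≤ Real.log (ρ a ^ t * ρ b ^ s) :=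
        Real.log_le_log (hpos _ (hI ha hb ht hs hts)) (h a ha b hb t s ht hs hts)
    _ = t • Real.log (ρ a) + s • Real.log (ρ b) := by
        rw [Real.log_mul (by positivity) (by positivity), Real.log_rpow hpa, Real.log_rpow hpb,
          smul_eq_mul, smul_eq_mul]

theorem continuousOn_of_convexOn_log {I : Set ℝ} (hI : IsOpen I) {ρ : ℝ → ℝ}
    (hpos : ∀ k ∈ I, 0 < ρ k) (hconv : ConvexOn ℝ I fun k => Real.log (ρ k)) :
    ContinuousOn ρ I :=
  (Real.continuous_exp.comp_continuousOn (hconv.continuousOn hI)).congr fun k hk =>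
    (Real.exp_log (hpos k hk)).symm

theorem existsUnique_eq_one_of_convexOn_log {ρ : ℝ → ℝ} {a b : ℝ} (hab : a < b)
    (hpos : ∀ k ∈ Icc a b, 0 < ρ k) (hconv : ConvexOn ℝ (Icc a b) fun k => Real.log (ρ k))
    (hcont : ContinuousOn ρ (Icc a b)) (ha : ρ a < 1) (hb : 1 < ρ b) :
    ∃! k, k ∈ Ioo a b ∧ ρ k = 1 := by
  obtain ⟨k, hk, hk1⟩ := intermediate_value_Ioo hab.le hcont ⟨ha, hb⟩
  -- two zeros `y < z` of `log ∘ ρ`: positive slope on `[a, y]`, zero slope on `[y, z]`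
  have hlt : ∀ y z, y ∈ Ioo a b → z ∈ Ioo a b → ρ y = 1 → ρ z = 1 → ¬ y < z := by
    intro y z hy hz hy1 hz1 hyz
    have hslope := hconv.slope_mono_adjacent (left_mem_Icc.2 hab.le) (Ioo_subset_Icc_self hz)
      hy.1 hyz
    have hloga : Real.log (ρ a) < 0 := Real.log_neg (hpos a (left_mem_Icc.2 hab.le)) ha
    rw [hy1, hz1, Real.log_one, sub_self, zero_div] at hslope
    exact (div_pos (by linarith) (sub_pos.2 hy.1)).not_ge hslope
  refine ⟨k, ⟨hk, hk1⟩, fun y ⟨hy, hy1⟩ => ?_⟩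
  exact le_antisymm (not_lt.1 (hlt k y hk hy hk1 hy1)) (not_lt.1 (hlt y k hy hk hy1 hk1))

namespace ContinuousLinearMap

variable {X : Type*} [TopologicalSpace X] {T : C(X, ℝ) →L[ℝ] C(X, ℝ)}

theorem monotone_pow (hT : Monotone T) (n : ℕ) : Monotone ⇑(T ^ n) := by
  rw [FunLike.coe_pow_eq_iterate]
  exact hT.iterate n

theorem apply_one_nonneg (hT : Monotone T) (x : X) : 0 ≤ T 1 x := by
  simpa using hT (zero_le_one : (0 : C(X, ℝ)) ≤ 1) x

variable [CompactSpace X]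

theorem abs_apply_le_norm_mul_apply_one (hT : Monotone T) (f : C(X, ℝ)) (x : X) :
    |T f x| ≤ ‖f‖ * T 1 x := by
  have hf : ∀ g : C(X, ℝ), ‖g‖ = ‖f‖ → T g x ≤ ‖f‖ * T 1 x := fun g hg => by
    have hle : g ≤ ‖f‖ • (1 : C(X, ℝ)) := fun y => by
      simpa [← hg] using (le_abs_self (g y)).trans (g.norm_coe_le_norm y)
    simpa using hT hle x
  rw [abs_le]
  constructor
  · simpa [neg_le] using hf (-f) (norm_neg f)
  · exact hf f rfl

theorem opNorm_eq_norm_apply_one (hT : Monotone T) : ‖T‖ = ‖T 1‖ := by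
  refine le_antisymm (opNorm_le_bound _ (norm_nonneg _) fun f => ?_) ?_
  · refine (ContinuousMap.norm_le _ (by positivity)).2 fun x => ?_
    calc ‖T f x‖ ≤ ‖f‖ * T 1 x := abs_apply_le_norm_mul_apply_one hT f x
      _ ≤ ‖f‖ * ‖T 1‖ :=
        mul_le_mul_of_nonneg_left ((le_abs_self _).trans ((T 1).norm_coe_le_norm x)) (norm_nonneg f)
      _ = ‖T 1‖ * ‖f‖ := mul_comm _ _
  · have h1 : ‖(1 : C(X, ℝ))‖ ≤ 1 := (ContinuousMap.norm_le _ zero_le_one).2 fun _ => by simp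
    simpa using (T.le_opNorm 1).trans (mul_le_of_le_one_right (norm_nonneg T) h1)

theorem pow_le_opNorm_pow [Nonempty X] (hT : Monotone T) {c : ℝ} (hc : 0 ≤ c)
    (h : ∀ x, c ≤ T 1 x) (n : ℕ) : c ^ n ≤ ‖T ^ n‖ := by
  have hpow : ∀ n : ℕ, ∀ x, c ^ n ≤ (T ^ n) 1 x := by
    intro n
    induction n with
    | zero => simp
    | succ n ih =>
      intro x
      have hle : c ^ n • (1 : C(X, ℝ)) ≤ (T ^ n) 1 := fun y => by simpa using ih y
      calc c ^ (n + 1) = c ^ n * c := pow_succ c n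
        _ ≤ c ^ n * T 1 x := mul_le_mul_of_nonneg_left (h x) (pow_nonneg hc n)
        _ ≤ (T ^ (n + 1)) 1 x := by
          rw [pow_succ', mul_apply_eq_comp]
          simpa using hT hle x
  obtain ⟨x⟩ := ‹Nonempty X›
  rw [opNorm_eq_norm_apply_one (monotone_pow hT n)]
  exact (hpow n x).trans ((le_abs_self _).trans (((T ^ n) 1).norm_coe_le_norm x))

theorem pow_apply_one_le_of_holder {A B C : C(X, ℝ) →L[ℝ] C(X, ℝ)} (hA : Monotone A)
    (hB : Monotone B) {t s : ℝ}
    (hC : ∀ g h u : C(X, ℝ), (∀ y, 0 ≤ g y) → (∀ y, 0 ≤ h y) → (∀ y, u y ≤ g y ^ t * h y ^ s) →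
      ∀ x, C u x ≤ A g x ^ t * B h x ^ s)
    (n : ℕ) (x : X) : (C ^ n) 1 x ≤ (A ^ n) 1 x ^ t * (B ^ n) 1 x ^ s := by
  induction n generalizing x with
  | zero => simp
  | succ n ih =>
    simp only [pow_succ', mul_apply_eq_comp]
    exact hC _ _ _ (apply_one_nonneg (monotone_pow hA n)) (apply_one_nonneg (monotone_pow hB n))
      ih x

theorem opNorm_pow_le_of_holder {A B C : C(X, ℝ) →L[ℝ] C(X, ℝ)} (hA : Monotone A)
    (hB : Monotone B) (hCm : Monotone C) {t s : ℝ} (ht : 0 ≤ t) (hs : 0 ≤ s)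
    (hC : ∀ g h u : C(X, ℝ), (∀ y, 0 ≤ g y) → (∀ y, 0 ≤ h y) → (∀ y, u y ≤ g y ^ t * h y ^ s) →
      ∀ x, C u x ≤ A g x ^ t * B h x ^ s)
    (n : ℕ) : ‖C ^ n‖ ≤ ‖A ^ n‖ ^ t * ‖B ^ n‖ ^ s := by
  have hAn := monotone_pow hA n
  have hBn := monotone_pow hB n
  have hCn := monotone_pow hCm n
  rw [opNorm_eq_norm_apply_one hAn, opNorm_eq_norm_apply_one hBn, opNorm_eq_norm_apply_one hCn]
  refine (ContinuousMap.norm_le _ (by positivity)).2 fun x => ?_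
  rw [Real.norm_of_nonneg (apply_one_nonneg hCn x)]
  refine (pow_apply_one_le_of_holder hA hB hC n x).trans ?_
  have hle : ∀ f : C(X, ℝ), f x ≤ ‖f‖ := fun f => (le_abs_self _).trans (f.norm_coe_le_norm x)
  exact mul_le_mul (Real.rpow_le_rpow (apply_one_nonneg hAn x) (hle _) ht)
    (Real.rpow_le_rpow (apply_one_nonneg hBn x) (hle _) hs)
    (Real.rpow_nonneg (apply_one_nonneg hBn x) s) (Real.rpow_nonneg (norm_nonneg _) t)

theorem le_rpow_mul_rpow_of_holder {A B C : C(X, ℝ) →L[ℝ] C(X, ℝ)} (hA : Monotone A)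
    (hB : Monotone B) (hCm : Monotone C) {t s : ℝ} (ht : 0 ≤ t) (hs : 0 ≤ s)
    (hC : ∀ g h u : C(X, ℝ), (∀ y, 0 ≤ g y) → (∀ y, 0 ≤ h y) → (∀ y, u y ≤ g y ^ t * h y ^ s) →
      ∀ x, C u x ≤ A g x ^ t * B h x ^ s)
    {a b c : ℝ} (hρA : Tendsto (fun n : ℕ => ‖A ^ n‖ ^ ((1 : ℝ) / n)) atTop (𝓝 a))
    (hρB : Tendsto (fun n : ℕ => ‖B ^ n‖ ^ ((1 : ℝ) / n)) atTop (𝓝 b))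
    (hρC : Tendsto (fun n : ℕ => ‖C ^ n‖ ^ ((1 : ℝ) / n)) atTop (𝓝 c)) :
    c ≤ a ^ t * b ^ s :=
  le_rpow_mul_rpow_of_tendsto_rpow ht hs (fun _ => opNorm_nonneg _) (fun _ => opNorm_nonneg _)
    (fun _ => opNorm_nonneg _) (opNorm_pow_le_of_holder hA hB hCm ht hs hC) hρC hρA hρB

theorem pos_of_tendsto_opNorm_pow_rpow [Nonempty X] (hT : Monotone T) (h1 : ∀ x, 0 < T 1 x)
    {ρ : ℝ} (hρ : Tendsto (fun n : ℕ => ‖T ^ n‖ ^ ((1 : ℝ) / n)) atTop (𝓝 ρ)) : 0 < ρ := by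
  obtain ⟨x₀, -, hmin⟩ :=
    isCompact_univ.exists_isMinOn univ_nonempty (T 1).continuous.continuousOn
  exact (h1 x₀).trans_le (le_of_pow_le_of_tendsto_rpow (h1 x₀).le
    (pow_le_opNorm_pow hT (h1 x₀).le fun x => hmin (mem_univ x)) hρ)

end ContinuousLinearMap

theorem MeasureTheory.Integrable.rpow_mul_rpow {Ω : Type*} [MeasurableSpace Ω] {μ : Measure Ω}
    {F G : Ω → ℝ} (hF : Integrable F μ) (hG : Integrable G μ) (hF0 : ∀ ω, 0 ≤ F ω)
    (hG0 : ∀ ω, 0 ≤ G ω) {p q : ℝ} (hp : 0 ≤ p) (hq : 0 ≤ q) (hpq : p + q = 1) :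
    Integrable (fun ω => F ω ^ p * G ω ^ q) μ := by
  refine ((hF.const_mul p).add (hG.const_mul q)).mono'
    ((hF.aemeasurable.pow_const p).mul (hG.aemeasurable.pow_const q)).aestronglyMeasurable
    (Eventually.of_forall fun ω => ?_)
  rw [Real.norm_of_nonneg (by positivity [hF0 ω, hG0 ω])]
  exact Real.geom_mean_le_arith_mean2_weighted hp hq (hF0 ω) (hG0 ω) hpq

theorem integral_rpow_mul_rpow_le {Ω : Type*} [MeasurableSpace Ω] {μ : Measure Ω} {F G : Ω → ℝ}
    (hF : Integrable F μ) (hG : Integrable G μ) (hF0 : ∀ ω, 0 ≤ F ω) (hG0 : ∀ ω, 0 ≤ G ω)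
    {p q : ℝ} (hp : 0 ≤ p) (hq : 0 ≤ q) (hpq : p + q = 1) :
    ∫ ω, F ω ^ p * G ω ^ q ∂μ ≤ (∫ ω, F ω ∂μ) ^ p * (∫ ω, G ω ∂μ) ^ q := by
  have hIF : 0 ≤ ∫ ω, F ω ∂μ := integral_nonneg hF0
  have hIG : 0 ≤ ∫ ω, G ω ∂μ := integral_nonneg hG0
  have hofReal : ∀ {H : Ω → ℝ}, Integrable H μ → (∀ ω, 0 ≤ H ω) →
      ∫⁻ ω, ENNReal.ofReal (H ω) ∂μ = ENNReal.ofReal (∫ ω, H ω ∂μ) := fun hH hH0 =>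
    (ofReal_integral_eq_lintegral_ofReal hH (Eventually.of_forall hH0)).symm
  have key := ENNReal.lintegral_mul_norm_pow_le (μ := μ)
    hF.aemeasurable.ennreal_ofReal hG.aemeasurable.ennreal_ofReal hp hq hpq
  have hprod : ∀ ω, ENNReal.ofReal (F ω) ^ p * ENNReal.ofReal (G ω) ^ q
      = ENNReal.ofReal (F ω ^ p * G ω ^ q) := fun ω => by
    rw [ENNReal.ofReal_mul (by positivity [hF0 ω]), ENNReal.ofReal_rpow_of_nonneg (hF0 ω) hp,
      ENNReal.ofReal_rpow_of_nonneg (hG0 ω) hq]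
  simp_rw [hprod] at key
  rw [hofReal (hF.rpow_mul_rpow hG hF0 hG0 hp hq hpq) fun ω => by positivity [hF0 ω, hG0 ω],
    hofReal hF hF0, hofReal hG hG0, ENNReal.ofReal_rpow_of_nonneg hIF hp,
    ENNReal.ofReal_rpow_of_nonneg hIG hq, ← ENNReal.ofReal_mul (by positivity)] at key
  exact (ENNReal.ofReal_le_ofReal_iff (by positivity)).1 key

section IntegralKernel

variable {X : Type*} [TopologicalSpace X] {Ω : Type*} [MeasurableSpace Ω] {μ : Measure Ω}
  {W : X → Ω → ℝ} {φ : X → Ω → X} {T : C(X, ℝ) →L[ℝ] C(X, ℝ)}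

theorem monotone_of_integral_kernel (hW : ∀ x ω, 0 ≤ W x ω)
    (hint : ∀ x (f : C(X, ℝ)), Integrable (fun ω => W x ω * f (φ x ω)) μ)
    (hT : ∀ f x, T f x = ∫ ω, W x ω * f (φ x ω) ∂μ) : Monotone T := fun f g hfg x => by
  change T f x ≤ T g x
  rw [hT, hT]
  exact integral_mono (hint x f) (hint x g) fun ω => mul_le_mul_of_nonneg_left (hfg _) (hW x ω)

theorem apply_one_pos_of_integral_kernel [NeZero μ] (hW : ∀ x ω, 0 < W x ω)
    (hint : ∀ x (f : C(X, ℝ)), Integrable (fun ω => W x ω * f (φ x ω)) μ)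
    (hT : ∀ f x, T f x = ∫ ω, W x ω * f (φ x ω) ∂μ) (x : X) : 0 < T 1 x := by
  have hsupp : Function.support (fun ω => W x ω * (1 : C(X, ℝ)) (φ x ω)) = univ :=
    eq_univ_of_forall fun ω => by simpa using (hW x ω).ne'
  rw [hT, integral_pos_iff_support_of_nonneg (fun ω => by simpa using (hW x ω).le) (hint x 1),
    hsupp]
  exact Measure.measure_univ_pos.2 (NeZero.ne μ)

theorem apply_le_rpow_mul_rpow_of_integral_kernel {A B C : C(X, ℝ) →L[ℝ] C(X, ℝ)}
    {a b t s : ℝ} (ht : 0 ≤ t) (hs : 0 ≤ s) (hts : t + s = 1) (hW : ∀ x ω, 0 < W x ω)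
    (hintA : ∀ x (f : C(X, ℝ)), Integrable (fun ω => W x ω ^ a * f (φ x ω)) μ)
    (hintB : ∀ x (f : C(X, ℝ)), Integrable (fun ω => W x ω ^ b * f (φ x ω)) μ)
    (hintC : ∀ x (f : C(X, ℝ)), Integrable (fun ω => W x ω ^ (t * a + s * b) * f (φ x ω)) μ)
    (hA : ∀ f x, A f x = ∫ ω, W x ω ^ a * f (φ x ω) ∂μ)
    (hB : ∀ f x, B f x = ∫ ω, W x ω ^ b * f (φ x ω) ∂μ)
    (hC : ∀ f x, C f x = ∫ ω, W x ω ^ (t * a + s * b) * f (φ x ω) ∂μ)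
    {g h u : C(X, ℝ)} (hg : ∀ y, 0 ≤ g y) (hh : ∀ y, 0 ≤ h y)
    (hu : ∀ y, u y ≤ g y ^ t * h y ^ s) (x : X) :
    C u x ≤ A g x ^ t * B h x ^ s := by
  have hGa : ∀ ω, 0 ≤ W x ω ^ a * g (φ x ω) := fun ω => by positivity [(hW x ω).le, hg (φ x ω)]
  have hHb : ∀ ω, 0 ≤ W x ω ^ b * h (φ x ω) := fun ω => by positivity [(hW x ω).le, hh (φ x ω)]
  have hpt : ∀ ω, W x ω ^ (t * a + s * b) * u (φ x ω)
      ≤ (W x ω ^ a * g (φ x ω)) ^ t * (W x ω ^ b * h (φ x ω)) ^ s := fun ω => by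
    have hWx := hW x ω
    calc W x ω ^ (t * a + s * b) * u (φ x ω)
        ≤ W x ω ^ (t * a + s * b) * (g (φ x ω) ^ t * h (φ x ω) ^ s) :=
          mul_le_mul_of_nonneg_left (hu _) (by positivity)
      _ = (W x ω ^ a * g (φ x ω)) ^ t * (W x ω ^ b * h (φ x ω)) ^ s := by
          rw [Real.mul_rpow (by positivity) (hg _), Real.mul_rpow (by positivity) (hh _),
            ← Real.rpow_mul hWx.le, ← Real.rpow_mul hWx.le, Real.rpow_add hWx, mul_comm a,
            mul_comm b]
          ring
  rw [hA, hB, hC]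
  exact (integral_mono (hintC x u) ((hintA x g).rpow_mul_rpow (hintB x h) hGa hHb ht hs hts)
    hpt).trans (integral_rpow_mul_rpow_le (hintA x g) (hintB x h) hGa hHb ht hs hts)

end IntegralKernel

theorem Real.rpow_le_one_add_rpow {r R κ κ₀ : ℝ} (hr : 0 ≤ r) (hrR : r ≤ R) (hκ : 0 ≤ κ)
    (hκκ₀ : κ ≤ κ₀) : r ^ κ ≤ 1 + R ^ κ₀ := by
  rcases le_or_gt r 1 with hr1 | hr1
  · linarith [Real.rpow_le_one hr hr1 hκ, Real.rpow_nonneg (hr.trans hrR) κ₀]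
  · calc r ^ κ ≤ r ^ κ₀ := Real.rpow_le_rpow_of_exponent_le hr1.le hκκ₀
      _ ≤ R ^ κ₀ := Real.rpow_le_rpow hr hrR (hκ.trans hκκ₀)
      _ ≤ 1 + R ^ κ₀ := by linarith

instance matrixBorelSpace {d : ℕ} : BorelSpace (Matrix (Fin d) (Fin d) ℝ) :=
  inferInstanceAs (BorelSpace ((Fin d) → (Fin d) → ℝ))

section RowAction

variable {d : ℕ}

theorem continuous_vecMulE :
    Continuous fun p : EuclideanSpace ℝ (Fin d) × Matrix (Fin d) (Fin d) ℝ => vecMulE p.1 p.2 :=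
  (EuclideanSpace.equiv (Fin d) ℝ).symm.continuous.comp
    (((EuclideanSpace.equiv (Fin d) ℝ).continuous.comp continuous_fst).matrix_vecMul continuous_snd)

theorem opNormRow_nonneg (A : Matrix (Fin d) (Fin d) ℝ) : 0 ≤ opNormRow A :=
  Real.iSup_nonneg fun _ => norm_nonneg _

theorem norm_vecMulE_le_opNormRow (x : Metric.sphere (0 : EuclideanSpace ℝ (Fin d)) 1)
    (A : Matrix (Fin d) (Fin d) ℝ) : ‖vecMulE x.1 A‖ ≤ opNormRow A := by
  have hc : Continuous fun y : EuclideanSpace ℝ (Fin d) => ‖vecMulE y A‖ :=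
    (continuous_vecMulE.comp (continuous_id.prodMk continuous_const)).norm
  have hbdd := (isCompact_sphere (0 : EuclideanSpace ℝ (Fin d)) 1).bddAbove_image hc.continuousOn
  refine le_ciSup (f := fun y : {y : EuclideanSpace ℝ (Fin d) // ‖y‖ = 1} => ‖vecMulE y.1 A‖)
    (hbdd.mono ?_) ⟨x.1, mem_sphere_zero_iff_norm.1 x.2⟩
  rintro _ ⟨y, rfl⟩
  exact mem_image_of_mem _ (mem_sphere_zero_iff_norm.2 y.2)

theorem integrable_norm_vecMulE_rpow_mul {Ω : Type*} [MeasurableSpace Ω] {μ : Measure Ω}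
    [IsFiniteMeasure μ] {M : Ω → Matrix (Fin d) (Fin d) ℝ} (hM : Measurable M) {κ₀ κ : ℝ}
    (hInt : Integrable (fun ω => opNormRow (M ω) ^ κ₀) μ) (hκ : 0 ≤ κ) (hκκ₀ : κ ≤ κ₀)
    {x : Metric.sphere (0 : EuclideanSpace ℝ (Fin d)) 1} (hne : ∀ ω, vecMulE x.1 (M ω) ≠ 0)
    (f : C(Metric.sphere (0 : EuclideanSpace ℝ (Fin d)) 1, ℝ)) :
    Integrable (fun ω => ‖vecMulE x.1 (M ω)‖ ^ κ * f (projS (vecMulE x.1 (M ω)) (hne ω))) μ := by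
  have hv : Measurable fun ω => vecMulE x.1 (M ω) :=
    (continuous_vecMulE.comp (continuous_const.prodMk continuous_id)).measurable.comp hM
  have hproj : Measurable fun ω => f (projS (vecMulE x.1 (M ω)) (hne ω)) :=
    f.continuous.measurable.comp (hv.norm.inv.smul hv).subtype_mk
  refine (((integrable_const 1).add hInt).const_mul ‖f‖).mono'
    ((hv.norm.pow_const κ).mul hproj).aestronglyMeasurable (Eventually.of_forall fun ω => ?_)
  rw [norm_mul, Real.norm_of_nonneg (by positivity), mul_comm]
  exact mul_le_mul (f.norm_coe_le_norm _) (Real.rpow_le_one_add_rpow (norm_nonneg _)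
    (norm_vecMulE_le_opNormRow x (M ω)) hκ hκκ₀) (by positivity) (norm_nonneg f)

end RowAction

theorem stmt15_general {d : ℕ} (hd : 0 < d) {Ω : Type*} [MeasurableSpace Ω]
    (μ : Measure Ω) [IsProbabilityMeasure μ]
    (M : Ω → Matrix (Fin d) (Fin d) ℝ) (hM : Measurable M)
    (κ₀ : ℝ)
    (hInt : Integrable (fun ω => opNormRow (M ω) ^ κ₀) μ)
    (hne : ∀ (x : Metric.sphere (0 : EuclideanSpace ℝ (Fin d)) 1) (ω : Ω),
      vecMulE x.1 (M ω) ≠ 0)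
    (T : ℝ → (C(Metric.sphere (0 : EuclideanSpace ℝ (Fin d)) 1, ℝ)
        →L[ℝ] C(Metric.sphere (0 : EuclideanSpace ℝ (Fin d)) 1, ℝ)))
    (hT : ∀ k ∈ Ioc (0 : ℝ) κ₀,
      ∀ (f : C(Metric.sphere (0 : EuclideanSpace ℝ (Fin d)) 1, ℝ))
        (x : Metric.sphere (0 : EuclideanSpace ℝ (Fin d)) 1),
      (T k) f x = ∫ ω, (‖vecMulE x.1 (M ω)‖ ^ k) *
        f (projS (vecMulE x.1 (M ω)) (hne x ω)) ∂μ)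
    (ρ : ℝ → ℝ)
    (hρ : ∀ k ∈ Ioc (0 : ℝ) κ₀,
      Tendsto (fun n : ℕ => ‖(T k) ^ n‖ ^ ((1 : ℝ) / n)) atTop (nhds (ρ k))) :
    ConvexOn ℝ (Ioo 0 κ₀) (fun k => Real.log (ρ k)) ∧
    ContinuousOn ρ (Ioo 0 κ₀) ∧
    ∀ κ₂ κ₁ : ℝ, 0 < κ₂ → κ₂ < κ₁ → κ₁ < κ₀ → ρ κ₂ < 1 → 1 < ρ κ₁ →
      ∃! k : ℝ, k ∈ Ioo κ₂ κ₁ ∧ ρ k = 1 := by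
  have : Nonempty (Metric.sphere (0 : EuclideanSpace ℝ (Fin d)) 1) :=
    ⟨⟨EuclideanSpace.single ⟨0, hd⟩ 1, by simp⟩⟩
  have hw : ∀ (x : Metric.sphere (0 : EuclideanSpace ℝ (Fin d)) 1) ω, 0 < ‖vecMulE x.1 (M ω)‖ :=
    fun x ω => norm_pos_iff.2 (hne x ω)
  have hint : ∀ k ∈ Ioc 0 κ₀, ∀ (x : Metric.sphere (0 : EuclideanSpace ℝ (Fin d)) 1)
      (f : C(Metric.sphere (0 : EuclideanSpace ℝ (Fin d)) 1, ℝ)), Integrable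
      (fun ω => ‖vecMulE x.1 (M ω)‖ ^ k * f (projS (vecMulE x.1 (M ω)) (hne x ω))) μ :=
    fun k hk x => integrable_norm_vecMulE_rpow_mul hM hInt hk.1.le hk.2 (hne x)
  have hmono : ∀ k ∈ Ioc 0 κ₀, Monotone (T k) := fun k hk =>
    monotone_of_integral_kernel (fun x ω => Real.rpow_nonneg (hw x ω).le k) (hint k hk) (hT k hk)
  have hpos : ∀ k ∈ Ioc 0 κ₀, 0 < ρ k := fun k hk =>
    ContinuousLinearMap.pos_of_tendsto_opNorm_pow_rpow (hmono k hk)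
      (apply_one_pos_of_integral_kernel (fun x ω => Real.rpow_pos_of_pos (hw x ω) k) (hint k hk)
        (hT k hk)) (hρ k hk)
  have hconv : ConvexOn ℝ (Ioc 0 κ₀) fun k => Real.log (ρ k) := by
    refine convexOn_log_of_le_rpow_mul_rpow (convex_Ioc 0 κ₀) hpos
      fun a ha b hb t s ht hs hts => ?_
    have hc : t * a + s * b ∈ Ioc 0 κ₀ := convex_Ioc 0 κ₀ ha hb ht hs hts
    exact ContinuousLinearMap.le_rpow_mul_rpow_of_holder (hmono a ha) (hmono b hb) (hmono _ hc)
      ht hs (fun g h u hg hh hu x => apply_le_rpow_mul_rpow_of_integral_kernel ht hs hts hw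
        (hint a ha) (hint b hb) (hint _ hc) (hT a ha) (hT b hb) (hT _ hc) hg hh hu x)
      (hρ a ha) (hρ b hb) (hρ _ hc)
  have hconvIoo := hconv.subset Ioo_subset_Ioc_self (convex_Ioo 0 κ₀)
  have hcont := continuousOn_of_convexOn_log isOpen_Ioo
    (fun k hk => hpos k (Ioo_subset_Ioc_self hk)) hconvIoo
  refine ⟨hconvIoo, hcont, fun κ₂ κ₁ h2 h21 h10 hρ2 hρ1 => ?_⟩
  have hsub : Icc κ₂ κ₁ ⊆ Ioo 0 κ₀ := Icc_subset_Ioo h2 h10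
  exact existsUnique_eq_one_of_convexOn_log h21
    (fun k hk => hpos k (Ioo_subset_Ioc_self (hsub hk)))
    (hconvIoo.subset hsub (convex_Icc κ₂ κ₁)) (hcont.mono hsub) hρ2 hρ1

/-- The spectral radius `ρ(κ) = lim ‖T_κ^n‖^{1/n}` of `T_κ f(x) = E[|xM|^κ f((xM)^∼)]` is
log-convex and continuous on `(0, κ₀)`; consequently if `ρ(κ₂) < 1 < ρ(κ₁)` for
`0 < κ₂ < κ₁ < κ₀`, there is a unique `κ ∈ (κ₂, κ₁)` with `ρ(κ) = 1`. -/
theorem stmt15 {d : ℕ} (hd : 0 < d) {Ω : Type*} [MeasurableSpace Ω]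
    (μ : Measure Ω) [IsProbabilityMeasure μ]
    (M : Ω → Matrix (Fin d) (Fin d) ℝ) (hM : Measurable M)
    (hGL : ∀ ω, IsUnit (M ω)) (κ₀ : ℝ) (hκ₀ : 0 < κ₀)
    (hInt : Integrable (fun ω => opNormRow (M ω) ^ κ₀) μ)
    (hne : ∀ (x : Metric.sphere (0 : EuclideanSpace ℝ (Fin d)) 1) (ω : Ω),
      vecMulE x.1 (M ω) ≠ 0)
    (T : ℝ → (C(Metric.sphere (0 : EuclideanSpace ℝ (Fin d)) 1, ℝ)
        →L[ℝ] C(Metric.sphere (0 : EuclideanSpace ℝ (Fin d)) 1, ℝ)))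
    (hT : ∀ k ∈ Ioc (0 : ℝ) κ₀,
      ∀ (f : C(Metric.sphere (0 : EuclideanSpace ℝ (Fin d)) 1, ℝ))
        (x : Metric.sphere (0 : EuclideanSpace ℝ (Fin d)) 1),
      (T k) f x = ∫ ω, (‖vecMulE x.1 (M ω)‖ ^ k) *
        f (projS (vecMulE x.1 (M ω)) (hne x ω)) ∂μ)
    (ρ : ℝ → ℝ)
    (hρ : ∀ k ∈ Ioc (0 : ℝ) κ₀,
      Tendsto (fun n : ℕ => ‖(T k) ^ n‖ ^ ((1 : ℝ) / n)) atTop (nhds (ρ k))) :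
    ConvexOn ℝ (Ioo 0 κ₀) (fun k => Real.log (ρ k)) ∧
    ContinuousOn ρ (Ioo 0 κ₀) ∧
    ∀ κ₂ κ₁ : ℝ, 0 < κ₂ → κ₂ < κ₁ → κ₁ < κ₀ → ρ κ₂ < 1 → 1 < ρ κ₁ →
      ∃! k : ℝ, k ∈ Ioo κ₂ κ₁ ∧ ρ k = 1 :=
  stmt15_general hd μ M hM κ₀ hInt hne T hT ρ hρ
end

section
/- Let g : (0, κ₀] → (0, ∞) be defined by g(ϰ) = ∫_S r(x)^{-1} E[|xΠ_n|^ϰ r((xΠ_n)^∼)] π(dx) for a fixed n ≥ 1, where r > 0 is continuous on the compact S and π a probability measure. Then g is convex (indeed log-convex), and if g(κ) = 1 while g(ϰ) < 1 for some ϰ < κ, then the left derivative of g at κ is strictly positive. Applied with the left derivative equal to ακn, this proves the drift α = (1/n) ∫_S r(x)^{-1} E[|xΠ_n|^κ (log|xΠ_n|) r((xΠ_n)^∼)] π(dx) is strictly positive. -/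
open MeasureTheory Filter Set

/-- The function `g(ϰ) = ∫_S r(x)⁻¹ E[|xΠ_n|^ϰ r((xΠ_n)^∼)] π(dx)` is convex; if `g(κ) = 1`
while `g(ϰ) < 1` for some `ϰ < κ`, its left derivative at `κ` is strictly positive, which
(the left derivative being `α·n`) proves positivity of the drift `α`. -/
theorem stmt16 {d : ℕ} (hd : 0 < d) {Ω : Type*} [MeasurableSpace Ω]
    (μ : Measure Ω) [IsProbabilityMeasure μ]
    (Pin : Ω → Matrix (Fin d) (Fin d) ℝ) (hPin : Measurable Pin) (n : ℕ) (hn : 1 ≤ n)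
    (hne : ∀ (x : Metric.sphere (0 : EuclideanSpace ℝ (Fin d)) 1) (ω : Ω),
      vecMulE x.1 (Pin ω) ≠ 0)
    (r : C(Metric.sphere (0 : EuclideanSpace ℝ (Fin d)) 1, ℝ)) (hr : ∀ x, 0 < r x)
    (π : Measure (Metric.sphere (0 : EuclideanSpace ℝ (Fin d)) 1))
    [IsProbabilityMeasure π]
    (κ₀ : ℝ) (hκ₀ : 0 < κ₀)
    (g : ℝ → ℝ)
    (hg : ∀ ϰ : ℝ, g ϰ = ∫ x, (r x)⁻¹ *
      ∫ ω, ‖vecMulE x.1 (Pin ω)‖ ^ ϰ *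
        r (projS (vecMulE x.1 (Pin ω)) (hne x ω)) ∂μ ∂π)
    (hInt : ∀ ϰ ∈ Ioc (0 : ℝ) κ₀,
      Integrable (fun p : Metric.sphere (0 : EuclideanSpace ℝ (Fin d)) 1 × Ω =>
        (r p.1)⁻¹ * (‖vecMulE p.1.1 (Pin p.2)‖ ^ ϰ *
          r (projS (vecMulE p.1.1 (Pin p.2)) (hne p.1 p.2)))) (π.prod μ)) :
    ConvexOn ℝ (Ioo 0 κ₀) g ∧
    ∀ κ ∈ Ioc (0 : ℝ) κ₀, g κ = 1 → (∃ ϰ ∈ Ioo (0 : ℝ) κ, g ϰ < 1) →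
      ∀ α : ℝ,
        Tendsto (fun y => (g y - g κ) / (y - κ)) (nhdsWithin κ (Iio κ)) (nhds (α * n)) →
        0 < α := by
  -- the integrand over the product space
  set F : ℝ → Metric.sphere (0 : EuclideanSpace ℝ (Fin d)) 1 × Ω → ℝ := fun ϰ p =>
    (r p.1)⁻¹ * (‖vecMulE p.1.1 (Pin p.2)‖ ^ ϰ *
      r (projS (vecMulE p.1.1 (Pin p.2)) (hne p.1 p.2))) with hF
  have hgrep : ∀ ϰ ∈ Ioc (0 : ℝ) κ₀, g ϰ = ∫ p, F ϰ p ∂(π.prod μ) := by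
    intro ϰ hϰ
    have hfub := MeasureTheory.integral_integral (μ := π) (ν := μ)
      (f := fun x ω => (r x)⁻¹ * (‖vecMulE x.1 (Pin ω)‖ ^ ϰ *
        r (projS (vecMulE x.1 (Pin ω)) (hne x ω)))) (hInt ϰ hϰ)
    rw [hg, ← hfub]
    refine integral_congr_ae (Eventually.of_forall fun x => ?_)
    simp only [integral_const_mul]
  -- pointwise convexity of the integrand
  have hpt : ∀ (a b ta tb : ℝ), 0 ≤ ta → 0 ≤ tb → ta + tb = 1 →
      ∀ p, F (ta * a + tb * b) p ≤ ta * F a p + tb * F b p := by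
    intro a b ta tb hta htb hsum p
    have hx : 0 < ‖vecMulE p.1.1 (Pin p.2)‖ := norm_pos_iff.mpr (hne p.1 p.2)
    set x := ‖vecMulE p.1.1 (Pin p.2)‖ with hxdef
    have e : x ^ (ta * a + tb * b) = (x ^ a) ^ ta * (x ^ b) ^ tb := by
      rw [← Real.rpow_mul hx.le, ← Real.rpow_mul hx.le, ← Real.rpow_add hx,
        mul_comm a ta, mul_comm b tb]
    have hcombo : x ^ (ta * a + tb * b) ≤ ta * x ^ a + tb * x ^ b := by
      rw [e]
      exact Real.geom_mean_le_arith_mean2_weighted hta htb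
        (Real.rpow_nonneg hx.le a) (Real.rpow_nonneg hx.le b) hsum
    have hC : 0 ≤ (r p.1)⁻¹ * r (projS (vecMulE p.1.1 (Pin p.2)) (hne p.1 p.2)) :=
      mul_nonneg (inv_nonneg.mpr (hr _).le) (hr _).le
    have h2 := mul_le_mul_of_nonneg_right hcombo hC
    simp only [hF]
    nlinarith [h2]
  -- convexity on the closed-at-right interval
  have hconv : ConvexOn ℝ (Ioc (0 : ℝ) κ₀) g := by
    refine ⟨convex_Ioc _ _, ?_⟩
    intro a ha b hb ta tb hta htb hsum
    have hc : ta • a + tb • b ∈ Ioc (0 : ℝ) κ₀ := (convex_Ioc _ _) ha hb hta htb hsum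
    simp only [smul_eq_mul] at hc ⊢
    have hIa := (hInt a ha).const_mul ta
    have hIb := (hInt b hb).const_mul tb
    rw [hgrep _ hc, hgrep _ ha, hgrep _ hb]
    calc ∫ p, F (ta * a + tb * b) p ∂(π.prod μ)
        ≤ ∫ p, (ta * F a p + tb * F b p) ∂(π.prod μ) := by
          exact integral_mono (hInt _ hc) (hIa.add hIb) (hpt a b ta tb hta htb hsum)
      _ = ta * ∫ p, F a p ∂(π.prod μ) + tb * ∫ p, F b p ∂(π.prod μ) := by
          rw [integral_add hIa hIb, integral_const_mul, integral_const_mul]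
  refine ⟨hconv.subset Ioo_subset_Ioc_self (convex_Ioo _ _), ?_⟩
  rintro κ hκ hgκ ⟨ϰ, hϰ, hgϰ⟩ α hα
  have hκS : κ ∈ Ioc (0 : ℝ) κ₀ := hκ
  have hϰS : ϰ ∈ Ioc (0 : ℝ) κ₀ := ⟨hϰ.1, hϰ.2.le.trans hκ.2⟩
  set c : ℝ := (g ϰ - g κ) / (ϰ - κ) with hcdef
  have hcpos : 0 < c := by
    have h1 : g ϰ - g κ < 0 := by rw [hgκ]; linarith
    have h2 : ϰ - κ < 0 := by linarith [hϰ.2]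
    exact div_pos_of_neg_of_neg h1 h2
  have hev : ∀ᶠ y in nhdsWithin κ (Iio κ), c ≤ (g y - g κ) / (y - κ) := by
    filter_upwards [Ioo_mem_nhdsLT_of_mem (by constructor <;> simp [hϰ.2] : κ ∈ Ioc ϰ κ)]
      with y hy
    have hyS : y ∈ Ioc (0 : ℝ) κ₀ := ⟨hϰ.1.trans hy.1, hy.2.le.trans hκ.2⟩
    exact hconv.secant_mono hκS hϰS hyS (by linarith [hϰ.2]) hy.2.ne hy.1.le
  have hle : c ≤ α * n := ge_of_tendsto hα hev
  have hn' : (0 : ℝ) < n := by exact_mod_cast Nat.lt_of_lt_of_le Nat.zero_lt_one hn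
  by_contra hcon
  push_neg at hcon
  nlinarith
end

section
/- (Lévy-type inequality for the RDE) Let R be the stationary solution, x_0 ∈ S, ξ > 0, η, ζ ∈ (0,1), δ ∈ (0,ζ) such that P(zR > ξ) ≥ η and P(zR < (1−ζ)ξ) ≥ η for all z ∈ B_δ(x_0), and such that z·y > 1−δ for all z,y ∈ B_δ(x_0). Let (σ_n)_{n≥1} be stopping times at which (xΠ_{σ_n})^∼ ∈ B_δ(x_0), with R^{σ_n} independent of ℱ_{σ_n} and distributed as R. Then for all x ∈ S, y ∈ B_δ(x_0), and t > 0: P(|xR| > t) ≥ η · P(sup_{n≥1} |x Q^{σ_n} + ξ · x Π_{σ_n} y| > t). -/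
/-!
Put `T k = A k + ξ ⟪B k, y⟫` and split the event `sup_k |T k| > t` according to the first index `k`
with `|T k| > t`. That event is `𝒢 k`-measurable, and on it `⟪x, R⟫ - T k = ⟪B k, Rs k - ξ y⟫`,
where `Rs k` is independent of `𝒢 k` and distributed as `R`. Freezing `𝒢 k`, with probability at
least `η` the fresh copy `Rs k` moves `⟪x, R⟫` further away from `0` than `T k`: along the
direction `u = B k / ‖B k‖` it exceeds `ξ ≥ ξ ⟪u, y⟫` when `T k > t`, and it stays below
`(1 - ζ) ξ < (1 - δ) ξ < ξ ⟪u, y⟫` when `T k < -t`. Hence `|⟪x, R⟫| > t` with conditional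
probability at least `η` on each first-exceedance event, and these events are disjoint.
-/

open Function MeasureTheory ProbabilityTheory
open scoped ENNReal RealInnerProductSpace

namespace ProbabilityTheory

variable {Ω γ E : Type*} [MeasurableSpace γ] [MeasurableSpace E]

theorem IndepFun.mul_measure_le_measure_inter {_ : MeasurableSpace Ω} {μ : Measure Ω}
    [IsFiniteMeasure μ] {Z : Ω → γ} {X : Ω → E} (hZ : Measurable Z) (hX : Measurable X)
    (hindep : IndepFun Z X μ) {S : Set γ} (hS : MeasurableSet S) {P : Set (γ × E)}
    (hP : MeasurableSet P) {c : ℝ≥0∞} (hc : ∀ z ∈ S, c ≤ μ.map X {e | (z, e) ∈ P}) :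
    c * μ (Z ⁻¹' S) ≤ μ (Z ⁻¹' S ∩ {ω | (Z ω, X ω) ∈ P}) := by
  have hSP : MeasurableSet (S ×ˢ Set.univ ∩ P) := (hS.prod .univ).inter hP
  have hpreimage : Z ⁻¹' S ∩ {ω | (Z ω, X ω) ∈ P} =
      (fun ω ↦ (Z ω, X ω)) ⁻¹' (S ×ˢ Set.univ ∩ P) := by
    ext ω; simp
  rw [hpreimage, ← Measure.map_apply (hZ.prodMk hX) hSP,
    (indepFun_iff_map_prod_eq_prod_map_map hZ.aemeasurable hX.aemeasurable).1 hindep,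
    Measure.prod_apply hSP, ← Measure.map_apply hZ hS, ← setLIntegral_const,
    ← lintegral_indicator hS]
  refine lintegral_mono fun z ↦ ?_
  by_cases hz : z ∈ S
  · rw [Set.indicator_of_mem hz]
    convert hc z hz using 2
    ext e
    simp [hz]
  · simp [hz]

theorem Indep.mul_measure_le_measure_inter {𝒢 m : MeasurableSpace Ω} {μ : Measure Ω}
    [IsFiniteMeasure μ] (h𝒢 : 𝒢 ≤ m) {X : Ω → E} (hX : Measurable X)
    (hindep : Indep (MeasurableSpace.comap X ‹_›) 𝒢 μ) {S : Set Ω} (hS : MeasurableSet[𝒢] S)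
    {P : Set (Ω × E)} (hP : MeasurableSet[𝒢.prod ‹_›] P) {c : ℝ≥0∞}
    (hc : ∀ ω ∈ S, c ≤ μ.map X {e | (ω, e) ∈ P}) :
    c * μ S ≤ μ (S ∩ {ω | (ω, X ω) ∈ P}) :=
  @IndepFun.mul_measure_le_measure_inter Ω Ω E 𝒢 _ m μ _ id X (measurable_id'' h𝒢) hX
    (by rw [IndepFun_iff_Indep (mβ := 𝒢), MeasurableSpace.comap_id]; exact hindep.symm)
    S hS P hP c hc

end ProbabilityTheory

section FirstExceedance

variable {Ω : Type*}

def firstExceedance (T : ℕ → Ω → ℝ) (t : ℝ) (k : ℕ) : Set Ω :=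
  {ω | (∀ j < k, |T j ω| ≤ t) ∧ t < |T k ω|}

variable {T : ℕ → Ω → ℝ} {t : ℝ}

theorem pairwise_disjoint_firstExceedance : Pairwise (Disjoint on firstExceedance T t) := by
  refine (pairwise_disjoint_on _).2 fun k l hkl ↦ Set.disjoint_left.2 fun ω hk hl ↦ ?_
  exact (hl.1 k hkl).not_gt hk.2

theorem setOf_lt_iSup_subset_iUnion_firstExceedance :
    {ω | t < ⨆ k, |T k ω|} ⊆ ⋃ k, firstExceedance T t k := by
  classical
  intro ω hω
  have hex : ∃ k, t < |T k ω| := exists_lt_of_lt_ciSup hω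
  exact Set.mem_iUnion.2
    ⟨Nat.find hex, fun j hj ↦ not_lt.1 (Nat.find_min hex hj), Nat.find_spec hex⟩

theorem measurableSet_firstExceedance {m : MeasurableSpace Ω} {k : ℕ}
    (hT : ∀ j ≤ k, Measurable (T j)) : MeasurableSet (firstExceedance T t k) := by
  simp only [firstExceedance, Set.ofPred_and, Set.ofPred_forall]
  exact .inter (.iInter fun j ↦ .iInter fun hj ↦ measurableSet_le (hT j hj.le).abs measurable_const)
    (measurableSet_lt measurable_const (hT k le_rfl).abs)

end FirstExceedance

theorem MeasureTheory.mul_measure_iUnion_le_of_le_measure_inter {Ω ι : Type*} [Countable ι]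
    {_ : MeasurableSpace Ω} {μ : Measure Ω} {E : ι → Set Ω} {V : Set Ω} {c : ℝ≥0∞}
    (hE : ∀ i, MeasurableSet (E i)) (hdisj : Pairwise (Disjoint on E)) (hV : MeasurableSet V)
    (h : ∀ i, c * μ (E i) ≤ μ (E i ∩ V)) : c * μ (⋃ i, E i) ≤ μ V :=
  calc c * μ (⋃ i, E i) = ∑' i, c * μ (E i) := by
        rw [measure_iUnion hdisj hE, ENNReal.tsum_mul_left]
    _ ≤ ∑' i, μ (E i ∩ V) := ENNReal.tsum_le_tsum h
    _ ≤ μ (⋃ i, E i ∩ V) := tsum_meas_le_meas_iUnion_of_disjoint μ (fun i ↦ (hE i).inter hV)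
        (hdisj.mono fun _ _ h ↦ h.mono Set.inter_subset_left Set.inter_subset_left)
    _ ≤ μ V := measure_mono (Set.iUnion_subset fun _ ↦ Set.inter_subset_right)

section InnerProduct

variable {F : Type*} [NormedAddCommGroup F] [InnerProductSpace ℝ F]

theorem real_inner_eq_norm_mul_inner_inv_norm_smul (v r : F) :
    ⟪v, r⟫ = ‖v‖ * ⟪‖v‖⁻¹ • v, r⟫ := by
  rcases eq_or_ne v 0 with rfl | hv
  · simp
  · rw [real_inner_smul_left, ← mul_assoc, mul_inv_cancel₀ (norm_ne_zero_iff.2 hv), one_mul]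

theorem real_inner_smul_lt_of_lt_inner_inv_norm_smul {v r y : F} {ξ : ℝ} (hξ : 0 ≤ ξ)
    (hy : ‖y‖ ≤ 1) (h : ξ < ⟪‖v‖⁻¹ • v, r⟫) : ⟪v, ξ • y⟫ < ⟪v, r⟫ := by
  have hv : v ≠ 0 := by
    rintro rfl
    simp at h
    linarith
  have hvy : ⟪v, y⟫ ≤ ‖v‖ :=
    (real_inner_le_norm v y).trans (mul_le_of_le_one_right (norm_nonneg v) hy)
  rw [real_inner_smul_right, real_inner_eq_norm_mul_inner_inv_norm_smul v r]
  nlinarith [norm_pos_iff.2 hv]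

theorem real_inner_lt_inner_smul_of_inner_inv_norm_smul_lt {v r y : F} {ξ δ ζ : ℝ} (hv : v ≠ 0)
    (hξ : 0 < ξ) (hδζ : δ ≤ ζ) (hy : 1 - δ < ⟪‖v‖⁻¹ • v, y⟫)
    (h : ⟪‖v‖⁻¹ • v, r⟫ < (1 - ζ) * ξ) : ⟪v, r⟫ < ⟪v, ξ • y⟫ := by
  rw [real_inner_smul_right, real_inner_eq_norm_mul_inner_inv_norm_smul v r,
    real_inner_eq_norm_mul_inner_inv_norm_smul v y]
  have hu : ⟪‖v‖⁻¹ • v, r⟫ < ξ * ⟪‖v‖⁻¹ • v, y⟫ := by nlinarith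
  nlinarith [mul_lt_mul_of_pos_left hu (norm_pos_iff.2 hv)]

end InnerProduct

section RandomDifferenceEquation

variable {Ω F : Type*} [NormedAddCommGroup F] [InnerProductSpace ℝ F] [MeasurableSpace F]
  [OpensMeasurableSpace F] [SecondCountableTopology F]

theorem mul_measure_firstExceedance_le {𝒢 m : MeasurableSpace Ω} {μ : Measure Ω}
    [IsFiniteMeasure μ] (h𝒢 : 𝒢 ≤ m) {T : ℕ → Ω → ℝ} {k : ℕ}
    (hT : ∀ j ≤ k, Measurable[𝒢] (T j)) {a : Ω → ℝ} {b : Ω → F} (hb : Measurable[𝒢] b)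
    {w : F} (hTk : ∀ ω, T k ω = a ω + ⟪b ω, w⟫) {X R : Ω → F} (hX : Measurable X)
    (hR : Measurable R) (hindep : Indep (MeasurableSpace.comap X ‹_›) 𝒢 μ)
    (hlaw : μ.map X = μ.map R) {G : Set F} (hG : MeasurableSet G) (hbG : ∀ᵐ ω ∂μ, b ω ∈ G)
    {c : ℝ≥0∞} (hup : ∀ v ∈ G, c ≤ μ {ω | ⟪v, w⟫ < ⟪v, R ω⟫})
    (hdown : ∀ v ∈ G, c ≤ μ {ω | ⟪v, R ω⟫ < ⟪v, w⟫}) {Y : Ω → ℝ}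
    (hY : ∀ᵐ ω ∂μ, Y ω = ⟪b ω, X ω⟫ + a ω) (t : ℝ) :
    c * μ (firstExceedance T t k) ≤ μ (firstExceedance T t k ∩ {ω | t < |Y ω|}) := by
  let S := firstExceedance T t k ∩ b ⁻¹' G
  have hS : MeasurableSet[𝒢] S := (measurableSet_firstExceedance hT).inter (hb hG)
  let P : Set (Ω × F) := {p | t < T k p.1 ∧ ⟪b p.1, w⟫ < ⟪b p.1, p.2⟫ ∨
    T k p.1 < -t ∧ ⟪b p.1, p.2⟫ < ⟪b p.1, w⟫}
  have hP : MeasurableSet[𝒢.prod ‹_›] P := by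
    have hT' : Measurable[𝒢.prod ‹_›] fun p : Ω × F ↦ T k p.1 := (hT k le_rfl).comp measurable_fst
    have hbw : Measurable[𝒢.prod ‹_›] fun p : Ω × F ↦ ⟪b p.1, w⟫ :=
      (hb.comp measurable_fst).inner measurable_const
    have hbr : Measurable[𝒢.prod ‹_›] fun p : Ω × F ↦ ⟪b p.1, p.2⟫ :=
      (hb.comp measurable_fst).inner measurable_snd
    exact ((measurableSet_lt measurable_const hT').inter (measurableSet_lt hbw hbr)).union
      ((measurableSet_lt hT' measurable_const).inter (measurableSet_lt hbr hbw))
  have hc : ∀ ω ∈ S, c ≤ μ.map X {r | (ω, r) ∈ P} := by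
    rintro ω ⟨⟨-, hω⟩, hbω⟩
    rw [hlaw]
    refine le_trans ?_ (Measure.le_map_apply hR.aemeasurable _)
    rcases lt_abs.1 hω with hpos | hneg
    · exact (hup _ hbω).trans (measure_mono fun ω' h ↦ Or.inl ⟨hpos, h⟩)
    · exact (hdown _ hbω).trans (measure_mono fun ω' h ↦ Or.inr ⟨by linarith, h⟩)
  have hSE : S =ᵐ[μ] firstExceedance T t k := by
    filter_upwards [hbG] with ω hω
    exact propext ⟨And.left, fun h ↦ ⟨h, hω⟩⟩
  calc c * μ (firstExceedance T t k) = c * μ S := by rw [measure_congr hSE]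
    _ ≤ μ (S ∩ {ω | (ω, X ω) ∈ P}) := hindep.mul_measure_le_measure_inter h𝒢 hX hS hP hc
    _ ≤ μ (firstExceedance T t k ∩ {ω | t < |Y ω|}) := by
        refine measure_mono_ae ?_
        filter_upwards [hY] with ω hYω hω
        obtain ⟨⟨hE, -⟩, hPω⟩ := hω
        refine ⟨hE, show t < |Y ω| from lt_abs.2 ?_⟩
        rcases hPω with ⟨h1, h2⟩ | ⟨h1, h2⟩
        · exact Or.inl (by linarith [hTk ω])
        · exact Or.inr (by linarith [hTk ω])

end RandomDifferenceEquation

theorem stmt17_general {d : ℕ} {Ω : Type*} [m0 : MeasurableSpace Ω]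
    (μ : Measure Ω) [IsProbabilityMeasure μ]
    (x₀ : EuclideanSpace ℝ (Fin d))
    (ξ η ζ δ : ℝ) (hξ : 0 < ξ) (hη : 0 < η)
    (hδζ : δ < ζ)
    (R : Ω → EuclideanSpace ℝ (Fin d)) (hR : Measurable R)
    (hball1 : ∀ z : EuclideanSpace ℝ (Fin d), ‖z‖ = 1 → z ∈ Metric.ball x₀ δ →
      η ≤ (μ {ω | ξ < (inner ℝ z (R ω) : ℝ)}).toReal)
    (hball2 : ∀ z : EuclideanSpace ℝ (Fin d), ‖z‖ = 1 → z ∈ Metric.ball x₀ δ →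
      η ≤ (μ {ω | (inner ℝ z (R ω) : ℝ) < (1 - ζ) * ξ}).toReal)
    (hdot : ∀ z w : EuclideanSpace ℝ (Fin d), ‖z‖ = 1 → ‖w‖ = 1 →
      z ∈ Metric.ball x₀ δ → w ∈ Metric.ball x₀ δ → 1 - δ < (inner ℝ z w : ℝ))
    (𝒢 : ℕ → MeasurableSpace Ω) (hmono : Monotone 𝒢) (hle : ∀ k, 𝒢 k ≤ m0)
    (A : ℕ → Ω → ℝ) (B : ℕ → Ω → EuclideanSpace ℝ (Fin d))
    (Rs : ℕ → Ω → EuclideanSpace ℝ (Fin d))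
    (hA : ∀ k, @Measurable Ω ℝ (𝒢 k) _ (A k))
    (hB : ∀ k, @Measurable Ω (EuclideanSpace ℝ (Fin d)) (𝒢 k) _ (B k))
    (hRs : ∀ k, Measurable (Rs k))
    (hBball : ∀ k, ∀ᵐ ω ∂μ, B k ω ≠ 0 ∧ ‖B k ω‖⁻¹ • B k ω ∈ Metric.ball x₀ δ)
    (x : EuclideanSpace ℝ (Fin d))
    (hdecomp : ∀ k, ∀ᵐ ω ∂μ,
      (inner ℝ x (R ω) : ℝ) = (inner ℝ (B k ω) (Rs k ω) : ℝ) + A k ω)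
    (hindep : ∀ k, Indep (MeasurableSpace.comap (Rs k) inferInstance) (𝒢 k) μ)
    (hlaw : ∀ k, μ.map (Rs k) = μ.map R)
    (y : EuclideanSpace ℝ (Fin d)) (hy : ‖y‖ = 1) (hyball : y ∈ Metric.ball x₀ δ)
    (t : ℝ) :
    η * (μ {ω | t < ⨆ k : ℕ, |A k ω + ξ * (inner ℝ (B k ω) y : ℝ)|}).toReal
      ≤ (μ {ω | t < |(inner ℝ x (R ω) : ℝ)|}).toReal := by
  let T : ℕ → Ω → ℝ := fun k ω ↦ A k ω + ξ * ⟪B k ω, y⟫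
  let G : Set (EuclideanSpace ℝ (Fin d)) := {0}ᶜ ∩ (fun v ↦ ‖v‖⁻¹ • v) ⁻¹' Metric.ball x₀ δ
  have hT : ∀ k j, j ≤ k → Measurable[𝒢 k] (T j) := fun k j hj ↦
    ((hA j).add (measurable_const.mul ((hB j).inner measurable_const))).mono (hmono hj) le_rfl
  have hG : MeasurableSet G := by
    have : Measurable fun v : EuclideanSpace ℝ (Fin d) ↦ ‖v‖⁻¹ • v := by fun_prop
    exact (measurableSet_singleton 0).compl.inter (this measurableSet_ball)
  have hup : ∀ v ∈ G, ENNReal.ofReal η ≤ μ {ω | ⟪v, ξ • y⟫ < ⟪v, R ω⟫} := fun v ⟨hv, hvball⟩ ↦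
    (ENNReal.ofReal_le_of_le_toReal (hball1 _ (norm_smul_inv_norm hv) hvball)).trans <|
      measure_mono fun _ ↦ real_inner_smul_lt_of_lt_inner_inv_norm_smul hξ.le hy.le
  have hdown : ∀ v ∈ G, ENNReal.ofReal η ≤ μ {ω | ⟪v, R ω⟫ < ⟪v, ξ • y⟫} := fun v ⟨hv, hvball⟩ ↦
    (ENNReal.ofReal_le_of_le_toReal (hball2 _ (norm_smul_inv_norm hv) hvball)).trans <|
      measure_mono fun _ ↦ real_inner_lt_inner_smul_of_inner_inv_norm_smul_lt hv hξ hδζ.le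
        (hdot _ y (norm_smul_inv_norm hv) hy hvball hyball)
  have hexceed : ∀ k, ENNReal.ofReal η * μ (firstExceedance T t k) ≤
      μ (firstExceedance T t k ∩ {ω | t < |⟪x, R ω⟫|}) := fun k ↦
    mul_measure_firstExceedance_le (hle k) (hT k) (hB k) (fun _ ↦ by rw [real_inner_smul_right])
      (hRs k) hR (hindep k) (hlaw k) hG (hBball k) hup hdown (hdecomp k) t
  have hlevy := mul_measure_iUnion_le_of_le_measure_inter
    (fun k ↦ hle k _ (measurableSet_firstExceedance (hT k))) pairwise_disjoint_firstExceedance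
    (measurableSet_lt measurable_const hR.const_inner.abs) hexceed
  rw [← ENNReal.toReal_ofReal hη.le, ← ENNReal.toReal_mul]
  refine ENNReal.toReal_mono (measure_ne_top _ _) (le_trans ?_ hlevy)
  gcongr
  exact setOf_lt_iSup_subset_iUnion_firstExceedance

/-- Lévy-type inequality for the random difference equation: with `T_k = xQ^{σ_k} + ξ xΠ_{σ_k}y`
(here `A k = xQ^{σ_k}` and `B k = xΠ_{σ_k}`), the decomposition `xR = B_k · R^{σ_k} + A_k`,
`R^{σ_k}` independent of `ℱ_{σ_k}` with the law of `R`, `(B_k)^∼ ∈ B_δ(x₀)` a.s., and the ball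
conditions `P(zR > ξ) ≥ η`, `P(zR < (1−ζ)ξ) ≥ η` for `z ∈ B_δ(x₀)` together with
`z·w > 1−δ` on the ball, one has
`P(|xR| > t) ≥ η · P(sup_n |A_n + ξ⟨B_n, y⟩| > t)`. -/
theorem stmt17 {d : ℕ} (hd : 0 < d) {Ω : Type*} [m0 : MeasurableSpace Ω]
    (μ : Measure Ω) [IsProbabilityMeasure μ]
    (x₀ : EuclideanSpace ℝ (Fin d)) (hx₀ : ‖x₀‖ = 1)
    (ξ η ζ δ : ℝ) (hξ : 0 < ξ) (hη : 0 < η) (hη1 : η < 1) (hζ : 0 < ζ) (hζ1 : ζ < 1)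
    (hδ : 0 < δ) (hδζ : δ < ζ)
    (R : Ω → EuclideanSpace ℝ (Fin d)) (hR : Measurable R)
    (hball1 : ∀ z : EuclideanSpace ℝ (Fin d), ‖z‖ = 1 → z ∈ Metric.ball x₀ δ →
      η ≤ (μ {ω | ξ < (inner ℝ z (R ω) : ℝ)}).toReal)
    (hball2 : ∀ z : EuclideanSpace ℝ (Fin d), ‖z‖ = 1 → z ∈ Metric.ball x₀ δ →
      η ≤ (μ {ω | (inner ℝ z (R ω) : ℝ) < (1 - ζ) * ξ}).toReal)
    (hdot : ∀ z w : EuclideanSpace ℝ (Fin d), ‖z‖ = 1 → ‖w‖ = 1 →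
      z ∈ Metric.ball x₀ δ → w ∈ Metric.ball x₀ δ → 1 - δ < (inner ℝ z w : ℝ))
    (𝒢 : ℕ → MeasurableSpace Ω) (hmono : Monotone 𝒢) (hle : ∀ k, 𝒢 k ≤ m0)
    (A : ℕ → Ω → ℝ) (B : ℕ → Ω → EuclideanSpace ℝ (Fin d))
    (Rs : ℕ → Ω → EuclideanSpace ℝ (Fin d))
    (hA : ∀ k, @Measurable Ω ℝ (𝒢 k) _ (A k))
    (hB : ∀ k, @Measurable Ω (EuclideanSpace ℝ (Fin d)) (𝒢 k) _ (B k))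
    (hRs : ∀ k, Measurable (Rs k))
    (hBball : ∀ k, ∀ᵐ ω ∂μ, B k ω ≠ 0 ∧ ‖B k ω‖⁻¹ • B k ω ∈ Metric.ball x₀ δ)
    (x : EuclideanSpace ℝ (Fin d)) (hx : ‖x‖ = 1)
    (hdecomp : ∀ k, ∀ᵐ ω ∂μ,
      (inner ℝ x (R ω) : ℝ) = (inner ℝ (B k ω) (Rs k ω) : ℝ) + A k ω)
    (hindep : ∀ k, Indep (MeasurableSpace.comap (Rs k) inferInstance) (𝒢 k) μ)
    (hlaw : ∀ k, μ.map (Rs k) = μ.map R)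
    (y : EuclideanSpace ℝ (Fin d)) (hy : ‖y‖ = 1) (hyball : y ∈ Metric.ball x₀ δ)
    (t : ℝ) (ht : 0 < t) :
    η * (μ {ω | t < ⨆ k : ℕ, |A k ω + ξ * (inner ℝ (B k ω) y : ℝ)|}).toReal
      ≤ (μ {ω | t < |(inner ℝ x (R ω) : ℝ)|}).toReal :=
  stmt17_general (m0 := m0) μ x₀ ξ η ζ δ hξ hη hδζ R hR hball1 hball2 hdot 𝒢 hmono hle A B Rs hA hB
    hRs hBball x hdecomp hindep hlaw y hy hyball t
end

section
/- Let R be the stationary solution of R ≝ MR + Q with M ∈ GL(d,ℝ) a.s. Suppose the support of R (in ℝ^d) is unbounded, and define D := {y ∈ S : ∃ (x_n) ⊂ supp R with |x_n| → ∞ and x_n/|x_n| → y} (nonempty by compactness of S). If P(x_0·R ≤ t_0) = 1 for some unit vector x_0 and t_0 ∈ ℝ, then x_0·y ≤ 0 for all y ∈ D, and moreover My_0/|My_0| ∈ D a.s. for each y_0 ∈ D, whence P((x_0 M)^∼ · y_0 ≤ 0) = 1; in particular (x_0 M)^∼ avoids a neighborhood of y_0 in S almost surely. -/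
/-!
Since `x₀·R ≤ t₀` a.s. and half-spaces are closed, the whole of `supp R` lies in
`{v | x₀·v ≤ t₀}`; dividing by `|u_n| → ∞` gives `x₀·y ≤ 0` for every asymptotic direction `y`.
Almost surely the affine map `v ↦ Mv + Q` preserves `supp R`, and at infinity only its linear
part matters: it sends a sequence escaping in direction `y₀` to one escaping in direction
`(My₀)^∼`, which is well defined because `M` is invertible. Hence `(x₀M)·y₀ = x₀·My₀ ≤ 0`, and a
vector `w` with `w·y₀ ≤ 0` lies at distance at least `1` from the unit vector `y₀`.
-/

open MeasureTheory Filter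

/-- Matrix acting on a column vector in Euclidean space. -/
noncomputable def mulVecE {d : ℕ} (A : Matrix (Fin d) (Fin d) ℝ)
    (v : EuclideanSpace ℝ (Fin d)) : EuclideanSpace ℝ (Fin d) :=
  (EuclideanSpace.equiv (Fin d) ℝ).symm (A.mulVec ((EuclideanSpace.equiv (Fin d) ℝ) v))

/-- The support of the law of `R`. -/
def lawSupport {d : ℕ} {Ω : Type*} [MeasurableSpace Ω] (μ : Measure Ω)
    (R : Ω → EuclideanSpace ℝ (Fin d)) : Set (EuclideanSpace ℝ (Fin d)) :=
  {v | ∀ ε : ℝ, 0 < ε → 0 < μ {ω | dist (R ω) v < ε}}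

/-- The set `D` of directions along which `supp R` is unbounded. -/
def dirSet {d : ℕ} {Ω : Type*} [MeasurableSpace Ω] (μ : Measure Ω)
    (R : Ω → EuclideanSpace ℝ (Fin d)) : Set (EuclideanSpace ℝ (Fin d)) :=
  {y | ‖y‖ = 1 ∧ ∃ u : ℕ → EuclideanSpace ℝ (Fin d),
    (∀ n, u n ∈ lawSupport μ R) ∧ Tendsto (fun n => ‖u n‖) atTop atTop ∧
    Tendsto (fun n => ‖u n‖⁻¹ • u n) atTop (nhds y)}

open Topology NormedSpace

section Normalize

variable {E F : Type*} [NormedAddCommGroup E] [NormedSpace ℝ E]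
  [NormedAddCommGroup F] [NormedSpace ℝ F]

theorem NormedSpace.continuousAt_normalize {z : E} (hz : z ≠ 0) :
    ContinuousAt normalize z :=
  (continuous_norm.continuousAt.inv₀ (norm_ne_zero_iff.2 hz)).smul continuousAt_id

theorem tendsto_norm_atTop_of_tendsto_inv_smul {u : ℕ → E} {c : ℕ → ℝ} {z : E} (hz : z ≠ 0)
    (hc : Tendsto c atTop atTop) (h : Tendsto (fun n => (c n)⁻¹ • u n) atTop (𝓝 z)) :
    Tendsto (fun n => ‖u n‖) atTop atTop := by
  refine (hc.atTop_mul_pos (norm_pos_iff.2 hz) h.norm).congr' ?_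
  filter_upwards [hc.eventually_gt_atTop 0] with n hn
  rw [norm_smul, Real.norm_of_nonneg (inv_nonneg.2 hn.le), mul_inv_cancel_left₀ hn.ne']

theorem tendsto_normalize_of_tendsto_inv_smul {u : ℕ → E} {c : ℕ → ℝ} {z : E} (hz : z ≠ 0)
    (hc : Tendsto c atTop atTop) (h : Tendsto (fun n => (c n)⁻¹ • u n) atTop (𝓝 z)) :
    Tendsto (fun n => normalize (u n)) atTop (𝓝 (normalize z)) := by
  refine ((continuousAt_normalize hz).tendsto.comp h).congr' ?_
  filter_upwards [hc.eventually_gt_atTop 0] with n hn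
  exact normalize_smul_of_pos (inv_pos.2 hn) (u n)

theorem tendsto_affine_of_tendsto_normalize (L : E →L[ℝ] F) (q : F) {u : ℕ → E} {y : E}
    (hLy : L y ≠ 0) (hu : Tendsto (fun n => ‖u n‖) atTop atTop)
    (hdir : Tendsto (fun n => normalize (u n)) atTop (𝓝 y)) :
    Tendsto (fun n => ‖L (u n) + q‖) atTop atTop ∧
      Tendsto (fun n => normalize (L (u n) + q)) atTop (𝓝 (normalize (L y))) := by
  have hscaled : Tendsto (fun n => ‖u n‖⁻¹ • (L (u n) + q)) atTop (𝓝 (L y)) := by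
    have hq : Tendsto (fun n => ‖u n‖⁻¹ • q) atTop (𝓝 0) := by
      simpa using hu.inv_tendsto_atTop.smul_const q
    have hlim := ((L.continuous.tendsto y).comp hdir).add hq
    rw [add_zero] at hlim
    refine hlim.congr fun n => ?_
    rw [Function.comp_apply, smul_add, NormedSpace.normalize, L.map_smul]
  exact ⟨tendsto_norm_atTop_of_tendsto_inv_smul hLy hu hscaled,
    tendsto_normalize_of_tendsto_inv_smul hLy hu hscaled⟩

end Normalize

theorem norm_le_dist_of_inner_nonpos {E : Type*} [NormedAddCommGroup E] [InnerProductSpace ℝ E]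
    {w y : E} (h : inner ℝ w y ≤ 0) : ‖y‖ ≤ dist w y := by
  have hsq := norm_sub_sq_real w y
  rw [dist_eq_norm]
  nlinarith [norm_nonneg (w - y), norm_nonneg y, sq_nonneg ‖w‖]

section Euclidean

variable {d : ℕ}

theorem mulVecE_eq_toEuclideanCLM (A : Matrix (Fin d) (Fin d) ℝ) :
    mulVecE A = Matrix.toEuclideanCLM (n := Fin d) (𝕜 := ℝ) A :=
  rfl

theorem mulVecE_ne_zero {A : Matrix (Fin d) (Fin d) ℝ} (hA : IsUnit A)
    {v : EuclideanSpace ℝ (Fin d)} (hv : v ≠ 0) : mulVecE A v ≠ 0 := by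
  intro h
  change WithLp.toLp 2 (A.mulVec v.ofLp) = 0 at h
  have h' : A.mulVec v.ofLp = A.mulVec 0 := by simpa using congrArg WithLp.ofLp h
  exact hv (by simpa using Matrix.mulVec_injective_iff_isUnit.2 hA h')

theorem inner_vecMulE (x y : EuclideanSpace ℝ (Fin d)) (A : Matrix (Fin d) (Fin d) ℝ) :
    inner ℝ (vecMulE x A) y = inner ℝ x (mulVecE A y) := by
  simp only [EuclideanSpace.inner_eq_star_dotProduct, star_trivial]
  change y.ofLp ⬝ᵥ Matrix.vecMul x.ofLp A = A.mulVec y.ofLp ⬝ᵥ x.ofLp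
  rw [dotProduct_comm, ← Matrix.dotProduct_mulVec, dotProduct_comm]

variable {Ω : Type*} [MeasurableSpace Ω] {μ : Measure Ω} {R : Ω → EuclideanSpace ℝ (Fin d)}

theorem lawSupport_subset_of_ae_mem {F : Set (EuclideanSpace ℝ (Fin d))} (hF : IsClosed F)
    (h : ∀ᵐ ω ∂μ, R ω ∈ F) : lawSupport μ R ⊆ F := by
  intro v hv
  by_contra hvF
  obtain ⟨ε, hε, hball⟩ := Metric.isOpen_iff.1 hF.isOpen_compl v hvF
  exact (hv ε hε).ne' (measure_mono_null (fun ω hω => hball hω) (ae_iff.1 h))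

theorem inner_nonpos_of_mem_dirSet {x : EuclideanSpace ℝ (Fin d)} {t : ℝ}
    (hsupp : ∀ v ∈ lawSupport μ R, inner ℝ x v ≤ t) {y : EuclideanSpace ℝ (Fin d)}
    (hy : y ∈ dirSet μ R) : inner ℝ x y ≤ 0 := by
  obtain ⟨-, u, hu, hnorm, hdir⟩ := hy
  refine le_of_tendsto_of_tendsto' (tendsto_const_nhds.inner hdir)
    (by simpa using hnorm.inv_tendsto_atTop.mul_const t) fun n => ?_
  rw [real_inner_smul_right]
  exact mul_le_mul_of_nonneg_left (hsupp _ (hu n)) (inv_nonneg.2 (norm_nonneg _))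

theorem normalize_mulVecE_mem_dirSet {A : Matrix (Fin d) (Fin d) ℝ} (hA : IsUnit A)
    {q : EuclideanSpace ℝ (Fin d)}
    (hmaps : ∀ v ∈ lawSupport μ R, mulVecE A v + q ∈ lawSupport μ R)
    {y : EuclideanSpace ℝ (Fin d)} (hy : y ∈ dirSet μ R) :
    normalize (mulVecE A y) ∈ dirSet μ R := by
  obtain ⟨hy1, u, hu, hnorm, hdir⟩ := hy
  have hAy : mulVecE A y ≠ 0 := mulVecE_ne_zero hA (ne_zero_of_norm_ne_zero (hy1 ▸ one_ne_zero))
  rw [mulVecE_eq_toEuclideanCLM] at hmaps hAy ⊢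
  exact ⟨norm_normalize hAy, _, fun n => hmaps _ (hu n),
    tendsto_affine_of_tendsto_normalize _ q hAy hnorm hdir⟩

end Euclidean

theorem stmt18_general {d : ℕ} {Ω : Type*} [MeasurableSpace Ω]
    (μ : Measure Ω)
    (M : Ω → Matrix (Fin d) (Fin d) ℝ)
    (Qv : Ω → EuclideanSpace ℝ (Fin d))
    (R : Ω → EuclideanSpace ℝ (Fin d))
    (hInv : ∀ᵐ ω ∂μ, IsUnit (M ω))
    (hfix : ∀ᵐ ω ∂μ, ∀ v ∈ lawSupport μ R, mulVecE (M ω) v + Qv ω ∈ lawSupport μ R)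
    (x₀ : EuclideanSpace ℝ (Fin d)) (t₀ : ℝ)
    (hconc : ∀ᵐ ω ∂μ, (inner ℝ x₀ (R ω) : ℝ) ≤ t₀) :
    (∀ y ∈ dirSet μ R, (inner ℝ x₀ y : ℝ) ≤ 0) ∧
    (∀ y₀ ∈ dirSet μ R, ∀ᵐ ω ∂μ,
      ‖mulVecE (M ω) y₀‖⁻¹ • mulVecE (M ω) y₀ ∈ dirSet μ R) ∧
    (∀ y₀ ∈ dirSet μ R, ∀ᵐ ω ∂μ, (inner ℝ (vecMulE x₀ (M ω)) y₀ : ℝ) ≤ 0) ∧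
    (∀ y₀ ∈ dirSet μ R, ∃ δ : ℝ, 0 < δ ∧ ∀ᵐ ω ∂μ,
      δ ≤ dist (‖vecMulE x₀ (M ω)‖⁻¹ • vecMulE x₀ (M ω)) y₀) := by
  have hsupp : ∀ v ∈ lawSupport μ R, inner ℝ x₀ v ≤ t₀ :=
    lawSupport_subset_of_ae_mem (F := {v | inner ℝ x₀ v ≤ t₀})
      (isClosed_le (continuous_const.inner continuous_id) continuous_const) hconc
  have hdirM : ∀ y₀ ∈ dirSet μ R, ∀ᵐ ω ∂μ, normalize (mulVecE (M ω) y₀) ∈ dirSet μ R :=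
    fun y₀ hy₀ => by
      filter_upwards [hInv, hfix] with ω hA hmaps
      exact normalize_mulVecE_mem_dirSet hA hmaps hy₀
  have hx₀M : ∀ y₀ ∈ dirSet μ R, ∀ᵐ ω ∂μ, inner ℝ (vecMulE x₀ (M ω)) y₀ ≤ 0 :=
    fun y₀ hy₀ => by
      filter_upwards [hdirM y₀ hy₀] with ω hω
      rw [inner_vecMulE, ← norm_smul_normalize (mulVecE (M ω) y₀), real_inner_smul_right]
      exact mul_nonpos_of_nonneg_of_nonpos (norm_nonneg _)
        (inner_nonpos_of_mem_dirSet hsupp hω)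
  refine ⟨fun y hy => inner_nonpos_of_mem_dirSet hsupp hy, hdirM, hx₀M,
    fun y₀ hy₀ => ⟨1, one_pos, ?_⟩⟩
  filter_upwards [hx₀M y₀ hy₀] with ω hω
  rw [← hy₀.1]
  refine norm_le_dist_of_inner_nonpos ?_
  rw [real_inner_smul_left]
  exact mul_nonpos_of_nonneg_of_nonpos (by positivity) hω

/-- If `supp R` is unbounded, `M · supp R + Q ⊂ supp R` a.s., and `P(x₀·R ≤ t₀) = 1`, then
`x₀·y ≤ 0` for all `y ∈ D`, `(My₀)^∼ ∈ D` a.s. for `y₀ ∈ D`, whence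
`P((x₀M)·y₀ ≤ 0) = 1`; in particular `(x₀M)^∼` a.s. avoids a neighborhood of `y₀`. -/
theorem stmt18 {d : ℕ} (hd : 0 < d) {Ω : Type*} [MeasurableSpace Ω]
    (μ : Measure Ω) [IsProbabilityMeasure μ]
    (M : Ω → Matrix (Fin d) (Fin d) ℝ) (hM : Measurable M)
    (Qv : Ω → EuclideanSpace ℝ (Fin d)) (hQ : Measurable Qv)
    (R : Ω → EuclideanSpace ℝ (Fin d)) (hR : Measurable R)
    (hInv : ∀ᵐ ω ∂μ, IsUnit (M ω))
    (hfix : ∀ᵐ ω ∂μ, ∀ v ∈ lawSupport μ R, mulVecE (M ω) v + Qv ω ∈ lawSupport μ R)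
    (hUnb : ∀ C : ℝ, ∃ v ∈ lawSupport μ R, C < ‖v‖)
    (x₀ : EuclideanSpace ℝ (Fin d)) (hx₀ : ‖x₀‖ = 1) (t₀ : ℝ)
    (hconc : ∀ᵐ ω ∂μ, (inner ℝ x₀ (R ω) : ℝ) ≤ t₀) :
    (∀ y ∈ dirSet μ R, (inner ℝ x₀ y : ℝ) ≤ 0) ∧
    (∀ y₀ ∈ dirSet μ R, ∀ᵐ ω ∂μ,
      ‖mulVecE (M ω) y₀‖⁻¹ • mulVecE (M ω) y₀ ∈ dirSet μ R) ∧
    (∀ y₀ ∈ dirSet μ R, ∀ᵐ ω ∂μ, (inner ℝ (vecMulE x₀ (M ω)) y₀ : ℝ) ≤ 0) ∧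
    (∀ y₀ ∈ dirSet μ R, ∃ δ : ℝ, 0 < δ ∧ ∀ᵐ ω ∂μ,
      δ ≤ dist (‖vecMulE x₀ (M ω)‖⁻¹ • vecMulE x₀ (M ω)) y₀) :=
  stmt18_general μ M Qv R hInv hfix x₀ t₀ hconc
end
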